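/- arXiv:1504.01207 — 2 statements merged into one kernel-verified Lean document; each statement's English description precedes it below -/
import Mathlib

section
/- If x does not lie in the convex hull of affinely independent points p₁, p₂, p₃ in ℝ², then the sum of the areas of the triangles (x,p₂,p₃), (p₁,x,p₃), (p₁,p₂,x) is strictly greater than the area of triangle (p₁,p₂,p₃). -/
/-- Area of the triangle with vertices `p`, `q`, `r` in ℝ². -/
noncomputable def triArea (p q r : ℝ × ℝ) : ℝ :=
  |(q.1 - p.1) * (r.2 - p.2) - (q.2 - p.2) * (r.1 - p.1)| / 2

private lemma aux_indep (p₁ p₂ p₃ : ℝ × ℝ) (hind : AffineIndependent ℝ ![p₁, p₂, p₃])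
    (s t : ℝ) (h : s • (p₂ - p₁) + t • (p₃ - p₁) = 0) : s = 0 ∧ t = 0 := by
  rw [affineIndependent_iff] at hind
  have hcomb : ∑ e ∈ Finset.univ, (![-(s+t), s, t] : Fin 3 → ℝ) e • (![p₁,p₂,p₃] : Fin 3 → ℝ×ℝ) e = 0 := by
    simp only [Fin.sum_univ_three, Matrix.cons_val_zero, Matrix.cons_val_one, Matrix.head_cons,
      Matrix.cons_val_two, Matrix.tail_cons]
    have e : -(s+t) • p₁ + s • p₂ + t • p₃ = s • (p₂ - p₁) + t • (p₃ - p₁) := by module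
    rw [e, h]
  have := hind Finset.univ ![-(s+t), s, t] (by simp [Fin.sum_univ_three]) hcomb
  exact ⟨by simpa using this 1 (Finset.mem_univ _), by simpa using this 2 (Finset.mem_univ _)⟩

private lemma aux_mem (p₁ p₂ p₃ x : ℝ × ℝ) (w₁ w₂ w₃ : ℝ) (h₁ : 0 ≤ w₁) (h₂ : 0 ≤ w₂)
    (h₃ : 0 ≤ w₃) (hs : w₁ + w₂ + w₃ = 1) (hx : x = w₁ • p₁ + w₂ • p₂ + w₃ • p₃) :
    x ∈ convexHull ℝ ({p₁, p₂, p₃} : Set (ℝ × ℝ)) := by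
  have hc := convex_convexHull ℝ ({p₁, p₂, p₃} : Set (ℝ × ℝ))
  have hmem : ∀ i ∈ Finset.univ, (![p₁,p₂,p₃] : Fin 3 → ℝ×ℝ) i ∈ convexHull ℝ ({p₁, p₂, p₃} : Set (ℝ × ℝ)) := by
    intro i _
    fin_cases i <;> simp <;>
      exact subset_convexHull ℝ _ (by simp)
  have := hc.sum_mem (t := Finset.univ) (w := ![w₁,w₂,w₃]) (z := ![p₁,p₂,p₃])
    (fun i _ => by fin_cases i <;> simpa) (by simp [Fin.sum_univ_three, hs]) hmem
  simpa [Fin.sum_univ_three, ← hx] using this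

/-- If `x` is outside the convex hull of three affinely independent points, the three
sub-triangle areas sum to strictly more than the total area. -/
theorem stmt5 (p₁ p₂ p₃ x : ℝ × ℝ)
    (hind : AffineIndependent ℝ ![p₁, p₂, p₃])
    (hx : x ∉ convexHull ℝ {p₁, p₂, p₃}) :
    triArea p₁ p₂ p₃ < triArea x p₂ p₃ + triArea p₁ x p₃ + triArea p₁ p₂ x := by
  set a := (p₂.1 - x.1) * (p₃.2 - x.2) - (p₂.2 - x.2) * (p₃.1 - x.1) with ha_def
  set b := (x.1 - p₁.1) * (p₃.2 - p₁.2) - (x.2 - p₁.2) * (p₃.1 - p₁.1) with hb_def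
  set c := (p₂.1 - p₁.1) * (x.2 - p₁.2) - (p₂.2 - p₁.2) * (x.1 - p₁.1) with hc_def
  set D := (p₂.1 - p₁.1) * (p₃.2 - p₁.2) - (p₂.2 - p₁.2) * (p₃.1 - p₁.1) with hD_def
  have habc : a + b + c = D := by rw [ha_def, hb_def, hc_def, hD_def]; ring
  have hD : D ≠ 0 := by
    intro h0
    have h1 := aux_indep p₁ p₂ p₃ hind (p₃.1 - p₁.1) (-(p₂.1 - p₁.1)) (by
      apply Prod.ext <;> simp [Prod.ext_iff] <;> nlinarith [h0])
    have h2 := aux_indep p₁ p₂ p₃ hind (p₃.2 - p₁.2) (-(p₂.2 - p₁.2)) (by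
      apply Prod.ext <;> simp [Prod.ext_iff] <;> nlinarith [h0])
    have hp : p₂ = p₁ := by
      apply Prod.ext
      · have := h1.2; simp at this; linarith
      · have := h2.2; simp at this; linarith
    have : (1 : Fin 3) = 0 := hind.injective (by simp [hp])
    simp at this
  by_contra hcon
  push_neg at hcon
  simp only [triArea, ← ha_def, ← hb_def, ← hc_def, ← hD_def] at hcon
  -- hcon : |a|/2 + |b|/2 + |c|/2 ≤ |D|/2
  have hxid : x = (a/D) • p₁ + (b/D) • p₂ + (c/D) • p₃ := by
    apply Prod.ext <;> simp [Prod.ext_iff] <;> field_simp <;>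
      (rw [ha_def, hb_def, hc_def, hD_def]; ring)
  have hsum : a/D + b/D + c/D = 1 := by field_simp; linarith [habc]
  have habs : 0 ≤ a/D ∧ 0 ≤ b/D ∧ 0 ≤ c/D := by
    rcases hD.lt_or_gt with hneg | hpos
    · have hDabs : |D| = -D := abs_of_neg hneg
      have h1 : |a| ≤ -a ∨ True := Or.inr trivial
      have ka := neg_abs_le a; have kb := neg_abs_le b; have kc := neg_abs_le c
      have la := le_abs_self a; have lb := le_abs_self b; have lc := le_abs_self c
      have hha : a ≤ 0 := by linarith
      have hhb : b ≤ 0 := by linarith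
      have hhc : c ≤ 0 := by linarith
      exact ⟨div_nonneg_of_nonpos hha hneg.le,
        div_nonneg_of_nonpos hhb hneg.le,
        div_nonneg_of_nonpos hhc hneg.le⟩
    · have hDabs : |D| = D := abs_of_pos hpos
      have ka := neg_abs_le a; have kb := neg_abs_le b; have kc := neg_abs_le c
      have la := le_abs_self a; have lb := le_abs_self b; have lc := le_abs_self c
      have hha : 0 ≤ a := by linarith
      have hhb : 0 ≤ b := by linarith
      have hhc : 0 ≤ c := by linarith
      exact ⟨div_nonneg hha hpos.le, div_nonneg hhb hpos.le, div_nonneg hhc hpos.le⟩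
  exact hx (aux_mem p₁ p₂ p₃ x _ _ _ habs.1 habs.2.1 habs.2.2 hsum hxid)
end

section
/- Let M be an N×N nonnegative matrix formed as the product of L matrices, each of which is identity except one row, with diagonal entries at least β₁ ∈ (0,1) on updating rows, all row sums at most 1, and such that every row of M has row sum at most β₂ < 1 or has 'absorbed' a substochastic update. Then ‖M‖_∞ ≤ 1 − (1 − β₂)·β₁^{L−1}. -/
open Matrix

section aux

variable {N L : ℕ} {β₁ β₂ : ℝ}
variable {Q : Fin L → Matrix (Fin N) (Fin N) ℝ} {r : Fin L → Fin N}

lemma vecMul_apply (v : Fin N → ℝ) (A : Matrix (Fin N) (Fin N) ℝ) (j : Fin N) :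
    (v ᵥ* A) j = ∑ m, v m * A m j := rfl

lemma step_sum
    (hid : ∀ l i, i ≠ r l → ∀ j, Q l i j = if i = j then 1 else 0)
    (l : Fin L) (v : Fin N → ℝ) :
    ∑ j, (v ᵥ* Q l) j = ∑ j, v j - v (r l) * (1 - ∑ j, Q l (r l) j) := by
  have h1 : ∑ j, (v ᵥ* Q l) j = ∑ m, v m * ∑ j, Q l m j := by
    simp only [vecMul_apply, Finset.mul_sum]
    rw [Finset.sum_comm]
  have h2 : ∀ m : Fin N, m ≠ r l → v m * (∑ j, Q l m j) - v m = 0 := by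
    intro m hm
    have : (∑ j, Q l m j) = 1 := by simp [hid l m hm]
    rw [this]; ring
  have h3 : ∑ m, (v m * (∑ j, Q l m j) - v m)
      = v (r l) * (∑ j, Q l (r l) j) - v (r l) := by
    apply Finset.sum_eq_single_of_mem (r l) (Finset.mem_univ _)
    intro m _ hm
    exact h2 m hm
  rw [Finset.sum_sub_distrib] at h3
  rw [h1]
  linarith [h3]

lemma vecMul_nonneg (hnn : ∀ l i j, 0 ≤ Q l i j) (l : Fin L)
    {v : Fin N → ℝ} (hv : ∀ j, 0 ≤ v j) (j : Fin N) : 0 ≤ (v ᵥ* Q l) j := by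
  rw [vecMul_apply]
  exact Finset.sum_nonneg fun m _ => mul_nonneg (hv m) (hnn l m j)

lemma entry_lb (hnn : ∀ l i j, 0 ≤ Q l i j) (l : Fin L)
    {v : Fin N → ℝ} (hv : ∀ j, 0 ≤ v j) (j : Fin N) :
    v j * Q l j j ≤ (v ᵥ* Q l) j := by
  rw [vecMul_apply]
  exact Finset.single_le_sum (fun m _ => mul_nonneg (hv m) (hnn l m j))
    (Finset.mem_univ j)

lemma prod_mono (hnn : ∀ l i j, 0 ≤ Q l i j)
    (hrow : ∀ l i, ∑ j, Q l i j ≤ 1)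
    (hid : ∀ l i, i ≠ r l → ∀ j, Q l i j = if i = j then 1 else 0) :
    ∀ (ms : List (Fin L)) (v : Fin N → ℝ), (∀ j, 0 ≤ v j) →
    (∀ j, 0 ≤ (v ᵥ* (ms.map Q).prod) j) ∧
      ∑ j, (v ᵥ* (ms.map Q).prod) j ≤ ∑ j, v j := by
  intro ms
  induction ms with
  | nil => intro v hv; simp [hv]
  | cons l ms ih =>
    intro v hv
    have hstep : ∀ j, 0 ≤ (v ᵥ* Q l) j := vecMul_nonneg hnn l hv
    have hsum : ∑ j, (v ᵥ* Q l) j ≤ ∑ j, v j := by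
      rw [step_sum hid l v]
      have h1 : 0 ≤ v (r l) := hv _
      have h2 : ∑ j, Q l (r l) j ≤ 1 := hrow l _
      nlinarith
    have := ih (v ᵥ* Q l) hstep
    simp only [List.map_cons, List.prod_cons, ← Matrix.vecMul_vecMul]
    exact ⟨this.1, le_trans this.2 hsum⟩

lemma key (hβ₁ : β₁ ∈ Set.Ioo (0 : ℝ) 1) (hβ₂ : β₂ < 1)
    (hnn : ∀ l i j, 0 ≤ Q l i j)
    (hrow : ∀ l i, ∑ j, Q l i j ≤ 1)
    (hid : ∀ l i, i ≠ r l → ∀ j, Q l i j = if i = j then 1 else 0)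
    (hdiag : ∀ l, β₁ ≤ Q l (r l) (r l)) :
    ∀ (ms : List (Fin L)) (v : Fin N → ℝ) (c : ℝ) (i : Fin N),
    (∀ j, 0 ≤ v j) → 0 ≤ c → c ≤ v i →
    (∃ l ∈ ms, r l = i ∧ ∑ j, Q l i j ≤ β₂) →
    ∑ j, (v ᵥ* (ms.map Q).prod) j ≤ ∑ j, v j - (1 - β₂) * c * β₁ ^ (ms.length - 1) := by
  intro ms
  induction ms with
  | nil => intro v c i _ _ _ hex; simp at hex
  | cons l ms ih =>
    intro v c i hv hc hci hex
    have hβ₁0 : 0 < β₁ := hβ₁.1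
    have hβ₁1 : β₁ < 1 := hβ₁.2
    have hvnn : ∀ j, 0 ≤ (v ᵥ* Q l) j := vecMul_nonneg hnn l hv
    simp only [List.map_cons, List.prod_cons, ← Matrix.vecMul_vecMul]
    by_cases hcase : r l = i ∧ ∑ j, Q l i j ≤ β₂
    · -- absorbing step now
      obtain ⟨hrl, hρ⟩ := hcase
      have hsum : ∑ j, (v ᵥ* Q l) j ≤ ∑ j, v j - (1 - β₂) * c := by
        rw [step_sum hid l v, hrl]
        have h1 : (1 - β₂) * c ≤ v i * (1 - ∑ j, Q l i j) := by
          have := mul_le_mul hci (by linarith : 1 - β₂ ≤ 1 - ∑ j, Q l i j)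
            (by linarith) (le_trans hc hci)
          linarith [this]
        linarith
      have hmono := (prod_mono hnn hrow hid ms (v ᵥ* Q l) hvnn).2
      have hpow : β₁ ^ ((l :: ms).length - 1) ≤ 1 :=
        pow_le_one₀ (le_of_lt hβ₁0) (le_of_lt hβ₁1)
      have hcb : 0 ≤ (1 - β₂) * c := mul_nonneg (by linarith) hc
      calc ∑ j, ((v ᵥ* Q l) ᵥ* (ms.map Q).prod) j ≤ ∑ j, (v ᵥ* Q l) j := hmono
        _ ≤ ∑ j, v j - (1 - β₂) * c := hsum
        _ ≤ ∑ j, v j - (1 - β₂) * c * β₁ ^ ((l :: ms).length - 1) := by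
            nlinarith
    · -- witness must be in ms
      have hex' : ∃ l' ∈ ms, r l' = i ∧ ∑ j, Q l' i j ≤ β₂ := by
        obtain ⟨l', hl', h1, h2⟩ := hex
        rcases List.mem_cons.mp hl' with h | h
        · subst h; exact absurd ⟨h1, h2⟩ hcase
        · exact ⟨l', h, h1, h2⟩
      have hms : ms ≠ [] := by rintro rfl; simp at hex'
      have hci' : β₁ * c ≤ (v ᵥ* Q l) i := by
        by_cases hrl : r l = i
        · have := entry_lb hnn l hv i
          have hd : β₁ ≤ Q l i i := hrl ▸ hdiag l
          nlinarith [hv i]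
        · have := entry_lb hnn l hv i
          have : Q l i i = 1 := by
            rw [hid l i (fun h => hrl h.symm) i]; simp
          have h2 : v i ≤ (v ᵥ* Q l) i := by
            have h3 := entry_lb hnn l hv i
            rw [this] at h3; linarith
          nlinarith
      have hsum : ∑ j, (v ᵥ* Q l) j ≤ ∑ j, v j := by
        rw [step_sum hid l v]
        have h1 : 0 ≤ v (r l) := hv _
        have h2 : ∑ j, Q l (r l) j ≤ 1 := hrow l _
        nlinarith
      have := ih (v ᵥ* Q l) (β₁ * c) i hvnn
        (mul_nonneg (le_of_lt hβ₁0) hc) hci' hex'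
      have hlen : ms.length - 1 + 1 = ms.length :=
        Nat.succ_pred_eq_of_pos (List.length_pos_iff.mpr hms)
      have hpoweq : β₁ * β₁ ^ (ms.length - 1) = β₁ ^ ms.length := by
        rw [← pow_succ']; rw [hlen]
      have hlc : (l :: ms).length - 1 = ms.length := by simp
      rw [hlc]
      calc ∑ j, ((v ᵥ* Q l) ᵥ* (ms.map Q).prod) j
          ≤ ∑ j, (v ᵥ* Q l) j - (1 - β₂) * (β₁ * c) * β₁ ^ (ms.length - 1) := this
        _ ≤ ∑ j, v j - (1 - β₂) * c * β₁ ^ ms.length := by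
            rw [← hpoweq]; ring_nf; linarith [hsum]

end aux

/-- Norm bound on a slice of length `L`: `M = Q_{L-1} ⋯ Q_0` where each `Q_l` is
nonnegative, identity except in row `r l`, with row sums at most 1 and updating diagonal
entry at least `β₁ ∈ (0,1)`, and every row `i` absorbs a substochastic update (some
`Q_l` updates row `i` with row sum at most `β₂ < 1`). Then every row sum of `M` is at
most `1 − (1 − β₂)·β₁^{L−1}`, i.e. `‖M‖_∞ ≤ 1 − (1 − β₂)·β₁^{L−1}`. -/
theorem stmt14 (N L : ℕ) (hL : 1 ≤ L) (β₁ β₂ : ℝ)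
    (hβ₁ : β₁ ∈ Set.Ioo (0 : ℝ) 1) (hβ₂ : β₂ < 1)
    (Q : Fin L → Matrix (Fin N) (Fin N) ℝ) (r : Fin L → Fin N)
    (hnn : ∀ l i j, 0 ≤ Q l i j)
    (hrow : ∀ l i, ∑ j, Q l i j ≤ 1)
    (hid : ∀ l i, i ≠ r l → ∀ j, Q l i j = if i = j then 1 else 0)
    (hdiag : ∀ l, β₁ ≤ Q l (r l) (r l))
    (habs : ∀ i, ∃ l, r l = i ∧ ∑ j, Q l i j ≤ β₂) :
    ∀ i, ∑ j, ((List.ofFn Q).reverse.prod) i j ≤ 1 - (1 - β₂) * β₁ ^ (L - 1) := by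
  intro i
  set ms : List (Fin L) := (List.finRange L).reverse with hms
  have hMeq : (List.ofFn Q).reverse = ms.map Q := by
    rw [List.ofFn_eq_map, ← List.map_reverse]
  have hlen : ms.length = L := by simp [hms]
  have hex : ∃ l ∈ ms, r l = i ∧ ∑ j, Q l i j ≤ β₂ := by
    obtain ⟨l, h1, h2⟩ := habs i
    exact ⟨l, by simp [hms], h1, h2⟩
  have hkey := key hβ₁ hβ₂ hnn hrow hid hdiag ms (Pi.single i 1) 1 i
    (fun j => by by_cases h : j = i <;> simp [h, Pi.single_apply])
    zero_le_one (by simp) hex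
  have hrowi : ∀ j, ((Pi.single i 1 : Fin N → ℝ) ᵥ* (ms.map Q).prod) j
      = (ms.map Q).prod i j := by
    intro j
    rw [vecMul_apply]
    rw [Finset.sum_eq_single i]
    · simp
    · intro m _ hm; simp [Pi.single_apply, hm]
    · intro h; exact absurd (Finset.mem_univ i) h
  rw [hMeq]
  have hsingle : ∑ j, (Pi.single i 1 : Fin N → ℝ) j = 1 := by simp
  calc ∑ j, (ms.map Q).prod i j
      = ∑ j, ((Pi.single i 1 : Fin N → ℝ) ᵥ* (ms.map Q).prod) j := by
        simp_rw [hrowi]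
    _ ≤ ∑ j, (Pi.single i 1 : Fin N → ℝ) j - (1 - β₂) * 1 * β₁ ^ (ms.length - 1) := hkey
    _ = 1 - (1 - β₂) * β₁ ^ (L - 1) := by rw [hsingle, hlen]; ring
end
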